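/- arXiv:1912.02493 — 3 statements merged into one kernel-verified Lean document; each statement's English description precedes it below -/
import Mathlib

section
/- For every σ > 0 and every real z with 0 ≤ z ≤ 1, one has z² ≤ (1 / log(1 + 1/σ²)) · log(1 + z²/σ²). -/
/-!
Bernoulli's inequality `(1 + s) ^ p ≤ 1 + p s` for `0 ≤ p ≤ 1`, after taking logarithms, says that
`p ↦ log (1 + p s)` lies above its chord on `[0, 1]`. Apply it with `s = 1 / σ²`, `p = z²` and
divide by `log (1 + 1 / σ²) > 0`.
-/

open Real

theorem mul_log_one_add_le_log_one_add_mul {s p : ℝ} (hs : -1 < s) (hp0 : 0 ≤ p) (hp1 : p ≤ 1) :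
    p * log (1 + s) ≤ log (1 + p * s) := by
  have hpos : 0 < 1 + s := by linarith
  have bernoulli : (1 + s) ^ p ≤ 1 + p * s := rpow_one_add_le_one_add_mul_self hs.le hp0 hp1
  calc p * log (1 + s) = log ((1 + s) ^ p) := (log_rpow hpos p).symm
    _ ≤ log (1 + p * s) := log_le_log (rpow_pos_of_pos hpos p) bernoulli

/-- For σ > 0 and 0 ≤ z ≤ 1: z² ≤ (1 / log(1 + 1/σ²)) · log(1 + z²/σ²). -/
theorem sq_le_inv_log_mul_log (σ z : ℝ) (hσ : 0 < σ) (hz0 : 0 ≤ z) (hz1 : z ≤ 1) :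
    z ^ 2 ≤ (1 / Real.log (1 + 1 / σ ^ 2)) * Real.log (1 + z ^ 2 / σ ^ 2) := by
  have hs : 0 < 1 / σ ^ 2 := by positivity
  have hlog : 0 < log (1 + 1 / σ ^ 2) := log_pos (by linarith)
  have hz2 : z ^ 2 ≤ 1 := pow_le_one₀ hz0 hz1
  have key := mul_log_one_add_le_log_one_add_mul (s := 1 / σ ^ 2) (by linarith) (sq_nonneg z) hz2
  rw [mul_one_div] at key
  rwa [one_div_mul_eq_div, le_div_iff₀ hlog]
end

section
/- Suppose for all s in a finite set S_n: |f(s) − μ(s)| ≤ β^{1/2}·σ(s), and suppose s_n minimises μ(s) − β^{1/2}·σ(s) over a set containing c(s*), and |f(s*) − f(c(s*))| ≤ ε where c(s*) ∈ S_n. Then f(s_n) − f(s*) ≤ 2·β^{1/2}·σ(s_n) + ε. -/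
/-! On the confidence set, the upper bound `μ + w` dominates `f` and the lower confidence bound
`μ - w` is dominated by `f`. Hence `f(sₙ) ≤ lcb(sₙ) + 2 w(sₙ) ≤ lcb(c) + 2 w(sₙ) ≤ f(c) + 2 w(sₙ)`,
and `f(c)` is within `ε` of `f(s*)`. -/

theorem sub_le_two_mul_width_add_of_lcb_le {α : Type*} {f μ w : α → ℝ} {ε : ℝ} {sn s c : α}
    (hsn : |f sn - μ sn| ≤ w sn) (hc : |f c - μ c| ≤ w c)
    (hlcb : μ sn - w sn ≤ μ c - w c) (happrox : |f s - f c| ≤ ε) :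
    f sn - f s ≤ 2 * w sn + ε := by
  have hf_sn : f sn ≤ μ sn + w sn := by linarith [(abs_le.mp hsn).2]
  have hf_c : μ c - w c ≤ f c := by linarith [(abs_le.mp hc).1]
  have hf_s : f c - ε ≤ f s := by linarith [(abs_le.mp happrox).1]
  linarith

theorem lcb_instantaneous_regret_general {α : Type*} (S T : Set α)
    (f μ σ' : α → ℝ) (β ε : ℝ)
    (hconc : ∀ s ∈ S, |f s - μ s| ≤ Real.sqrt β * σ' s)
    (sn sstar cstar : α) (hsn : sn ∈ S) (hcstar : cstar ∈ S) (hcT : cstar ∈ T)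
    (hmin : ∀ s ∈ T, μ sn - Real.sqrt β * σ' sn ≤ μ s - Real.sqrt β * σ' s)
    (happrox : |f sstar - f cstar| ≤ ε) :
    f sn - f sstar ≤ 2 * Real.sqrt β * σ' sn + ε := by
  rw [mul_assoc]
  exact sub_le_two_mul_width_add_of_lcb_le (w := fun s => Real.sqrt β * σ' s)
    (hconc sn hsn) (hconc cstar hcstar) (hmin cstar hcT) happrox

/-- Core deterministic step of Lemma 1 (instantaneous regret of the LCB rule): if the
confidence bounds hold on S, s_n minimises the LCB over a set T containing c(s*), and
the grid approximation error of f at s* is at most ε, then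
f(s_n) − f(s*) ≤ 2·√β·σ(s_n) + ε. -/
theorem lcb_instantaneous_regret {α : Type*} (S T : Set α)
    (f μ σ' : α → ℝ) (β ε : ℝ) (hβ : 0 ≤ β) (hε : 0 ≤ ε)
    (hσ' : ∀ s, 0 ≤ σ' s)
    (hconc : ∀ s ∈ S, |f s - μ s| ≤ Real.sqrt β * σ' s)
    (sn sstar cstar : α) (hsn : sn ∈ S) (hcstar : cstar ∈ S) (hcT : cstar ∈ T)
    (hmin : ∀ s ∈ T, μ sn - Real.sqrt β * σ' sn ≤ μ s - Real.sqrt β * σ' s)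
    (happrox : |f sstar - f cstar| ≤ ε) :
    f sn - f sstar ≤ 2 * Real.sqrt β * σ' sn + ε :=
  lcb_instantaneous_regret_general S T f μ σ' β ε hconc sn sstar cstar hsn hcstar hcT hmin happrox
end

section
/- Let K_n be the n×n Gram matrix of points s_1,...,s_n under a kernel k, and σ > 0. Define I_n = (1/2)·log det(I_n + σ^{-2}·K_n). Then I_n − I_{n-1} = (1/2)·log(1 + σ^{-2}·σ²_{n-1}(s_n)), where σ²_{n-1}(s_n) = k(s_n,s_n) − k_{n-1}(s_n)ᵀ(K_{n-1} + σ²I)^{-1}k_{n-1}(s_n) is the GP posterior variance at s_n given noisy observations at s_1,...,s_{n-1}. -/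
open Matrix

/-! Since `1 + σ⁻² K = σ⁻² (K + σ² 1)`, each determinant is, up to a power of `σ⁻²`, that of
the regularised Gram matrix `K + σ² 1`. The Schur complement of the leading block of
`K_n + σ² 1` is `k(s_n, s_n) + σ² - k_{n-1}(s_n)ᵀ (K_{n-1} + σ² 1)⁻¹ k_{n-1}(s_n)`, so the ratio
of the two determinants is `σ⁻²` times it, i.e. `1 + σ⁻² σ²_{n-1}(s_n)`. -/

theorem Matrix.det_eq_det_submatrix_castSucc_mul_schur {K : Type*} [Field K] {n : ℕ}
    (M : Matrix (Fin (n + 1)) (Fin (n + 1)) K)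
    (hA : IsUnit (M.submatrix Fin.castSucc Fin.castSucc).det) :
    M.det = (M.submatrix Fin.castSucc Fin.castSucc).det *
      (M (Fin.last n) (Fin.last n) - (fun j => M (Fin.last n) j.castSucc) ⬝ᵥ
        ((M.submatrix Fin.castSucc Fin.castSucc)⁻¹ *ᵥ fun i => M i.castSucc (Fin.last n))) := by
  let _ := invertibleOfIsUnitDet _ hA
  have h₁₁ : (M.submatrix finSumFinEquiv finSumFinEquiv).toBlocks₁₁ =
      M.submatrix Fin.castSucc Fin.castSucc := rfl
  rw [← det_submatrix_equiv_self finSumFinEquiv M, ← fromBlocks_toBlocks (M.submatrix _ _), h₁₁,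
    det_fromBlocks₁₁, det_unique (n := Fin 1), invOf_eq_nonsing_inv]
  congr 1
  simp only [toBlocks₁₂, toBlocks₂₁, toBlocks₂₂, submatrix_apply, finSumFinEquiv_apply_left,
    finSumFinEquiv_apply_right, sub_apply, of_apply, mul_apply, dotProduct, mulVec,
    Finset.mul_sum, Finset.sum_mul, mul_assoc]
  rw [Finset.sum_comm]
  rfl

theorem Matrix.det_one_add_inv_smul {m K : Type*} [Fintype m] [DecidableEq m] [Field K]
    (M : Matrix m m K) {t : K} (ht : t ≠ 0) :
    (1 + t⁻¹ • M).det = t⁻¹ ^ Fintype.card m * (M + t • 1).det := by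
  rw [← det_smul, smul_add, smul_smul, inv_mul_cancel₀ ht, one_smul, add_comm]

theorem Matrix.PosSemidef.posDef_add_smul_one {m : Type*} [Fintype m] [DecidableEq m]
    {M : Matrix m m ℝ} (hM : M.PosSemidef) {t : ℝ} (ht : 0 < t) : (M + t • 1).PosDef :=
  PosDef.posSemidef_add hM (PosDef.one.smul ht)

theorem Matrix.PosSemidef.det_one_add_inv_smul_eq_mul_schur {n : ℕ}
    {M : Matrix (Fin (n + 1)) (Fin (n + 1)) ℝ} (hM : M.PosSemidef) {t : ℝ} (ht : 0 < t) :
    (1 + t⁻¹ • M).det = (1 + t⁻¹ • M.submatrix Fin.castSucc Fin.castSucc).det *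
      (1 + t⁻¹ * (M (Fin.last n) (Fin.last n) - (fun i => M i.castSucc (Fin.last n)) ⬝ᵥ
        ((M.submatrix Fin.castSucc Fin.castSucc + t • 1)⁻¹ *ᵥ
          fun i => M i.castSucc (Fin.last n)))) := by
  set M' := M.submatrix Fin.castSucc Fin.castSucc
  set u : Fin n → ℝ := fun i => M i.castSucc (Fin.last n)
  have hsub : (M + t • 1).submatrix Fin.castSucc Fin.castSucc = M' + t • 1 := by
    change M' + t • (1 : Matrix _ _ ℝ).submatrix Fin.castSucc Fin.castSucc = _
    rw [submatrix_one _ (Fin.castSucc_injective n)]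
  have hrow : (fun j => (M + t • 1) (Fin.last n) j.castSucc) = u := by
    ext j
    simp [u, one_apply_ne (Fin.castSucc_lt_last j).ne', ← hM.isHermitian.apply (Fin.last n)]
  have hcol : (fun i => (M + t • 1) i.castSucc (Fin.last n)) = u := by
    ext i
    simp [u, one_apply_ne (Fin.castSucc_lt_last i).ne]
  have hschur := det_eq_det_submatrix_castSucc_mul_schur (M + t • 1)
    (hsub ▸ ((hM.submatrix Fin.castSucc).posDef_add_smul_one ht).det_pos.ne'.isUnit)
  rw [hsub, hrow, hcol] at hschur
  rw [det_one_add_inv_smul _ ht.ne', det_one_add_inv_smul _ ht.ne', hschur]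
  simp only [add_apply, smul_apply, one_apply_eq, smul_eq_mul, Fintype.card_fin]
  rw [pow_succ]
  linear_combination (t⁻¹ ^ n * (M' + t • 1).det) * inv_mul_cancel₀ ht.ne'

/-- Information gain increment identity (Lemma 5.4 of Srinivas et al.): with
I_n = (1/2)·log det(I + σ⁻²K_n), one has
I_n − I_{n-1} = (1/2)·log(1 + σ⁻²·σ²_{n-1}(s_n)), where σ²_{n-1}(s_n) is the GP
posterior variance at the new point s_n. -/
theorem info_gain_increment {α : Type*} (k : α → α → ℝ) (n : ℕ) (s : Fin (n + 1) → α)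
    (σ : ℝ) (hσ : 0 < σ)
    (Kfull : Matrix (Fin (n + 1)) (Fin (n + 1)) ℝ)
    (hKfull : Kfull = fun i j => k (s i) (s j))
    (hpsd : Kfull.PosSemidef)
    (Kprev : Matrix (Fin n) (Fin n) ℝ)
    (hKprev : Kprev = fun i j => k (s i.castSucc) (s j.castSucc))
    (v : Fin n → ℝ) (hv : v = fun i => k (s i.castSucc) (s (Fin.last n))) :
    (1 / 2) * Real.log ((1 + (σ ^ 2)⁻¹ • Kfull).det)
      - (1 / 2) * Real.log ((1 + (σ ^ 2)⁻¹ • Kprev).det)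
    = (1 / 2) * Real.log (1 + (σ ^ 2)⁻¹ *
        (k (s (Fin.last n)) (s (Fin.last n))
          - v ⬝ᵥ ((Kprev + σ ^ 2 • (1 : Matrix (Fin n) (Fin n) ℝ))⁻¹ *ᵥ v))) := by
  have hKprev' : Kprev = Kfull.submatrix Fin.castSucc Fin.castSucc := by rw [hKprev, hKfull]; rfl
  have hv' : v = fun i => Kfull i.castSucc (Fin.last n) := by rw [hv, hKfull]
  have hlast : Kfull (Fin.last n) (Fin.last n) = k (s (Fin.last n)) (s (Fin.last n)) := by
    rw [hKfull]
  have hσ2 : 0 < σ ^ 2 := by positivity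
  have hdet := hpsd.det_one_add_inv_smul_eq_mul_schur hσ2
  rw [← hKprev', ← hv', hlast] at hdet
  have hfull : 0 < (1 + (σ ^ 2)⁻¹ • Kfull).det :=
    (PosDef.one.add_posSemidef (hpsd.smul (inv_nonneg.2 hσ2.le))).det_pos
  have hprev : 0 < (1 + (σ ^ 2)⁻¹ • Kprev).det :=
    (PosDef.one.add_posSemidef ((hKprev' ▸ hpsd.submatrix _).smul (inv_nonneg.2 hσ2.le))).det_pos
  rw [hdet, Real.log_mul hprev.ne' (right_ne_zero_of_mul (hdet ▸ hfull.ne'))]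
  ring
end
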